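/- Fix q ∈ [0,1], sites z_1,…,z_k ∈ ℤ and parameters x_1,…,x_k ∈ [0,1]. Let H_k be the random finitely-supported bijection of ℤ obtained by starting from the identity and applying the random asymmetric swaps W_{(z_1,z_1+1),x_1},…,W_{(z_k,z_k+1),x_k} in this order, and let H̃_k be obtained by applying the same swaps in the opposite order. Then for all integers x and y: Prob(H_k⁻¹(y) ≤ x) = Prob(H̃_k(y) ≤ x); in particular the probability that the particle of color y ends weakly to the left of position x in the forward process equals the probability that in the reversed process position y carries a color ≤ x. -/

import Mathlib

open scoped ENNReal

/-- One random asymmetric swap `W_{(z,z+1),x}` applied to a colored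
configuration `η : ℤ ≃ ℤ` (position `z` carries color `η z`): the particles at
positions `z` and `z+1` are exchanged with probability `x` if
`η z < η (z+1)` and with probability `q·x` if `η z > η (z+1)`. -/
noncomputable def swapStep (q : ℝ≥0∞) (hq : q ≤ 1) (z : ℤ)
    (x : ℝ≥0∞) (hx : x ≤ 1) (η : Equiv.Perm ℤ) : PMF (Equiv.Perm ℤ) :=
  (PMF.bernoulli (if η z < η (z + 1) then x else q * x).toNNReal
      (by
        have h : (if η z < η (z + 1) then x else q * x) ≤ 1 := by
          split_ifs
          · exact hx
          · exact le_trans (mul_le_mul' hq hx) (le_of_eq (one_mul 1))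
        have h2 := (ENNReal.toNNReal_le_toNNReal (ne_top_of_le_ne_top ENNReal.one_ne_top h)
          ENNReal.one_ne_top).mpr h
        rwa [ENNReal.toNNReal_one] at h2)).bind
    fun b => PMF.pure (if b then η * Equiv.swap z (z + 1) else η)

/-- Apply the asymmetric swaps `W_{(z_1,z_1+1),x_1}, …, W_{(z_k,z_k+1),x_k}`
(in this order, head of the list first, with independent randomness) to the
configuration `η`. -/
noncomputable def runSwaps (q : ℝ≥0∞) (hq : q ≤ 1) :
    List (ℤ × {x : ℝ≥0∞ // x ≤ 1}) → Equiv.Perm ℤ → PMF (Equiv.Perm ℤ)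
  | [], η => PMF.pure η
  | (z, x) :: rest, η => (swapStep q hq z x.1 x.2 η).bind (runSwaps q hq rest)

/-! ### Auxiliary development -/

noncomputable def bern (p : ℝ≥0∞) (hp : p ≤ 1) : PMF Bool :=
  PMF.bernoulli p.toNNReal
    (by
      have h2 := (ENNReal.toNNReal_le_toNNReal (ne_top_of_le_ne_top ENNReal.one_ne_top hp)
        ENNReal.one_ne_top).mpr hp
      rwa [ENNReal.toNNReal_one] at h2)

lemma bern_apply (p : ℝ≥0∞) (hp : p ≤ 1) (b : Bool) :
    bern p hp b = cond b p (1 - p) := by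
  have hpt : p ≠ ⊤ := ne_top_of_le_ne_top ENNReal.one_ne_top hp
  cases b <;> simp [bern, PMF.bernoulli_apply, ENNReal.coe_sub, ENNReal.coe_toNNReal hpt]

/-- The "mirror" step: left multiplication by the swap, with the rate read off
from the positions of colors `z`, `z+1`. -/
noncomputable def leftStep (q : ℝ≥0∞) (hq : q ≤ 1) (z : ℤ)
    (x : ℝ≥0∞) (hx : x ≤ 1) (η : Equiv.Perm ℤ) : PMF (Equiv.Perm ℤ) :=
  (bern (if η⁻¹ z < η⁻¹ (z + 1) then x else q * x)
      (by split_ifs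
          · exact hx
          · exact le_trans (mul_le_mul' hq hx) (by simp))).bind
    fun b => PMF.pure (if b then Equiv.swap z (z + 1) * η else η)

noncomputable def runLeft (q : ℝ≥0∞) (hq : q ≤ 1) :
    List (ℤ × {x : ℝ≥0∞ // x ≤ 1}) → Equiv.Perm ℤ → PMF (Equiv.Perm ℤ)
  | [], η => PMF.pure η
  | (z, x) :: rest, η => (leftStep q hq z x.1 x.2 η).bind (runLeft q hq rest)

lemma bern_bind_congr {α : Type*} {p p' : ℝ≥0∞} {hp : p ≤ 1} {hp' : p' ≤ 1}
    {f g : Bool → PMF α} (hpp : p = p') (hfg : ∀ b, f b = g b) :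
    (bern p hp).bind f = (bern p' hp').bind g := by
  subst hpp
  exact congrArg _ (funext hfg)

lemma swapStep_eq (q : ℝ≥0∞) (hq : q ≤ 1) (w : ℤ) (y : ℝ≥0∞) (hy : y ≤ 1)
    (η : Equiv.Perm ℤ) {p : ℝ≥0∞} (hp : p ≤ 1)
    (hcond : p = if η w < η (w + 1) then y else q * y) :
    swapStep q hq w y hy η = (bern p hp).bind
      fun c => PMF.pure (if c then η * Equiv.swap w (w + 1) else η) := by
  subst hcond; rfl

lemma leftStep_eq (q : ℝ≥0∞) (hq : q ≤ 1) (z : ℤ) (x : ℝ≥0∞) (hx : x ≤ 1)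
    (η : Equiv.Perm ℤ) {p : ℝ≥0∞} (hp : p ≤ 1)
    (hcond : p = if η⁻¹ z < η⁻¹ (z + 1) then x else q * x) :
    leftStep q hq z x hx η = (bern p hp).bind
      fun b => PMF.pure (if b then Equiv.swap z (z + 1) * η else η) := by
  subst hcond; rfl

lemma swap_lt_swap {z a b : ℤ} (hab : a ≠ b)
    (h1 : ¬(a = z ∧ b = z + 1)) (h2 : ¬(a = z + 1 ∧ b = z)) :
    Equiv.swap z (z + 1) a < Equiv.swap z (z + 1) b ↔ a < b := by
  rw [Equiv.swap_apply_def, Equiv.swap_apply_def]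
  split_ifs <;> omega

lemma key1 {p r p' r' : ℝ≥0∞} (h : p * r' = r * p') :
    (1 - p) * (1 - r) + p * r' = (1 - r) * (1 - p) + r * p' := by
  rw [h, mul_comm]

lemma key2 {p r p' r' : ℝ≥0∞} (hp : p ≤ 1) (hr : r ≤ 1) (hp' : p' ≤ 1) (hr' : r' ≤ 1)
    (h : p * r' = r * p') :
    (1 - p) * r + p * (1 - r') = (1 - r) * p + r * (1 - p') := by
  have hpt : p ≠ ⊤ := (lt_of_le_of_lt hp ENNReal.one_lt_top).ne
  have hrt : r ≠ ⊤ := (lt_of_le_of_lt hr ENNReal.one_lt_top).ne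
  have e1 : (1 - p) * r = r - p * r := by
    rw [ENNReal.sub_mul (fun _ _ => hrt), one_mul]
  have e2 : p * (1 - r') = p - p * r' := by
    rw [ENNReal.mul_sub (fun _ _ => hpt), mul_one]
  have e3 : (1 - r) * p = p - r * p := by
    rw [ENNReal.sub_mul (fun _ _ => hpt), one_mul]
  have e4 : r * (1 - p') = r - r * p' := by
    rw [ENNReal.mul_sub (fun _ _ => hrt), mul_one]
  rw [e1, e2, e3, e4]
  have c1 : AddLECancellable (p * r) :=
    ENNReal.cancel_of_ne (lt_of_le_of_lt (mul_le_one' hp hr) ENNReal.one_lt_top).ne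
  have c2 : AddLECancellable (p * r') :=
    ENNReal.cancel_of_ne (lt_of_le_of_lt (mul_le_one' hp hr') ENNReal.one_lt_top).ne
  have c3 : AddLECancellable (r * p) :=
    ENNReal.cancel_of_ne (lt_of_le_of_lt (mul_le_one' hr hp) ENNReal.one_lt_top).ne
  have c4 : AddLECancellable (r * p') :=
    ENNReal.cancel_of_ne (lt_of_le_of_lt (mul_le_one' hr hp') ENNReal.one_lt_top).ne
  have b1 : p * r ≤ r := (mul_le_mul_left hp r).trans_eq (one_mul r)
  have b2 : p * r' ≤ p := (mul_le_mul_right hr' p).trans_eq (mul_one p)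
  have b3 : r * p ≤ p := (mul_le_mul_left hr p).trans_eq (one_mul p)
  have b4 : r * p' ≤ r := (mul_le_mul_right hp' r).trans_eq (mul_one r)
  rw [c1.tsub_add_tsub_comm c2 b1 b2, c3.tsub_add_tsub_comm c4 b3 b4,
    add_comm r p, mul_comm p r, h]

lemma clash_comm {α : Type*} {σ τ : α} (hστ : σ ≠ τ) {p r p' r' : ℝ≥0∞}
    (hp : p ≤ 1) (hr : r ≤ 1) (hp' : p' ≤ 1) (hr' : r' ≤ 1) (h : p * r' = r * p') :
    ((bern p hp).bind fun b =>
        (bern (if b then r' else r)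
            (by cases b with | false => simpa using hr | true => simpa using hr')).bind
          fun c => PMF.pure (if b = c then σ else τ))
      = (bern r hr).bind fun c =>
        (bern (if c then p' else p)
            (by cases c with | false => simpa using hp | true => simpa using hp')).bind
          fun b => PMF.pure (if b = c then σ else τ) := by
  have hτσ : τ ≠ σ := hστ.symm
  ext π
  simp only [PMF.bind_apply, tsum_bool, bern_apply, PMF.pure_apply,
    cond_false, cond_true, if_false, if_true, Bool.false_eq_true, Bool.true_eq_false,
    reduceIte]
  by_cases hσ : π = σ
  · simp [hσ, hστ, hτσ]
    exact key1 h
  · by_cases hτ : π = τ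
    · simp [hτ, hστ, hτσ]
      exact key2 hp hr hp' hr' h
    · simp [hσ, hτ]

lemma step_comm (q : ℝ≥0∞) (hq : q ≤ 1) (z w : ℤ) (x y : ℝ≥0∞)
    (hx : x ≤ 1) (hy : y ≤ 1) (σ : Equiv.Perm ℤ) :
    (leftStep q hq z x hx σ).bind (swapStep q hq w y hy)
      = (swapStep q hq w y hy σ).bind (leftStep q hq z x hx) := by
  have hqx : q * x ≤ 1 := mul_le_one' hq hx
  have hqy : q * y ≤ 1 := mul_le_one' hq hy
  have hpLb : (if σ⁻¹ z < σ⁻¹ (z + 1) then x else q * x) ≤ 1 := by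
    split_ifs <;> [exact hx; exact hqx]
  have hpRb : (if σ w < σ (w + 1) then y else q * y) ≤ 1 := by
    split_ifs <;> [exact hy; exact hqy]
  have hww : σ w ≠ σ (w + 1) := fun hc => by
    have := σ.injective hc; omega
  have hzz : σ⁻¹ z ≠ σ⁻¹ (z + 1) := fun hc => by
    have := σ⁻¹.injective hc; omega
  have hpL : (leftStep q hq z x hx σ).bind (swapStep q hq w y hy)
      = (bern (if σ⁻¹ z < σ⁻¹ (z + 1) then x else q * x) hpLb).bind
          fun b => swapStep q hq w y hy (if b then Equiv.swap z (z + 1) * σ else σ) := by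
    simp only [leftStep, PMF.bind_bind]
    exact congrArg _ (funext fun b => PMF.pure_bind _ _)
  have hpR : (swapStep q hq w y hy σ).bind (leftStep q hq z x hx)
      = (bern (if σ w < σ (w + 1) then y else q * y) hpRb).bind
          fun c => leftStep q hq z x hx (if c then σ * Equiv.swap w (w + 1) else σ) := by
    simp only [swapStep, PMF.bind_bind]
    exact congrArg _ (funext fun c => PMF.pure_bind _ _)
  by_cases hA : σ w = z ∧ σ (w + 1) = z + 1
  · obtain ⟨h1, h2⟩ := hA
    have invz : σ⁻¹ z = w := by rw [Equiv.Perm.inv_eq_iff_eq]; exact h1.symm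
    have invz1 : σ⁻¹ (z + 1) = w + 1 := by rw [Equiv.Perm.inv_eq_iff_eq]; exact h2.symm
    have hst : Equiv.swap z (z + 1) * σ = σ * Equiv.swap w (w + 1) := by
      apply Equiv.ext; intro u
      simp only [Equiv.Perm.mul_apply]
      by_cases hu : u = w
      · subst hu; simp [h1, h2]
      · by_cases hu' : u = w + 1
        · subst hu'; simp [h1, h2]
        · have h3 : σ u ≠ z := fun he => hu (σ.injective (he.trans h1.symm))
          have h4 : σ u ≠ z + 1 := fun he => hu' (σ.injective (he.trans h2.symm))
          rw [Equiv.swap_apply_of_ne_of_ne hu hu', Equiv.swap_apply_of_ne_of_ne h3 h4]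
    have hτ : σ ≠ σ * Equiv.swap w (w + 1) := by
      intro he
      nth_rewrite 1 [← mul_one σ] at he
      have h5 := mul_left_cancel he
      have h6 := (Equiv.swap_eq_one_iff.mp h5.symm)
      omega
    have eL : (leftStep q hq z x hx σ).bind (swapStep q hq w y hy)
        = (bern x hx).bind fun b =>
            (bern (if b then q * y else y)
                (by cases b with | false => simpa using hy | true => simpa using hqy)).bind
              fun c => PMF.pure (if b = c then σ else σ * Equiv.swap w (w + 1)) := by
      rw [hpL]
      refine bern_bind_congr (by rw [invz, invz1, if_pos (by omega)]) fun b => ?_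
      cases b
      · show swapStep q hq w y hy σ = _
        refine (swapStep_eq q hq w y hy σ (p := y) hy
          (by rw [h1, h2, if_pos (by omega)])).trans ?_
        refine bern_bind_congr (by simp) fun c => ?_
        cases c <;> simp
      · show swapStep q hq w y hy (Equiv.swap z (z + 1) * σ) = _
        refine (swapStep_eq q hq w y hy _ (p := q * y) hqy ?_).trans ?_
        · have e1 : (Equiv.swap z (z + 1) * σ) w = z + 1 := by
            simp [Equiv.Perm.mul_apply, h1]
          have e2 : (Equiv.swap z (z + 1) * σ) (w + 1) = z := by
            simp [Equiv.Perm.mul_apply, h2]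
          rw [e1, e2, if_neg (by omega)]
        · refine bern_bind_congr (by simp) fun c => ?_
          cases c
          · simp [hst]
          · have hee : (Equiv.swap z (z + 1) * σ) * Equiv.swap w (w + 1) = σ := by
              rw [hst, mul_assoc, Equiv.swap_mul_self, mul_one]
            simp [hee]
    have eR : (swapStep q hq w y hy σ).bind (leftStep q hq z x hx)
        = (bern y hy).bind fun c =>
            (bern (if c then q * x else x)
                (by cases c with | false => simpa using hx | true => simpa using hqx)).bind
              fun b => PMF.pure (if b = c then σ else σ * Equiv.swap w (w + 1)) := by
      rw [hpR]
      refine bern_bind_congr (by rw [h1, h2, if_pos (by omega)]) fun c => ?_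
      cases c
      · show leftStep q hq z x hx σ = _
        refine (leftStep_eq q hq z x hx σ (p := x) hx
          (by rw [invz, invz1, if_pos (by omega)])).trans ?_
        refine bern_bind_congr (by simp) fun b => ?_
        cases b
        · simp
        · simp [hst]
      · show leftStep q hq z x hx (σ * Equiv.swap w (w + 1)) = _
        refine (leftStep_eq q hq z x hx _ (p := q * x) hqx ?_).trans ?_
        · have e1 : (σ * Equiv.swap w (w + 1))⁻¹ z = w + 1 := by
            rw [mul_inv_rev, Equiv.swap_inv, Equiv.Perm.mul_apply, invz]
            simp
          have e2 : (σ * Equiv.swap w (w + 1))⁻¹ (z + 1) = w := by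
            rw [mul_inv_rev, Equiv.swap_inv, Equiv.Perm.mul_apply, invz1]
            simp
          rw [e1, e2, if_neg (by omega)]
        · refine bern_bind_congr (by simp) fun b => ?_
          cases b
          · simp
          · have hee : Equiv.swap z (z + 1) * (σ * Equiv.swap w (w + 1)) = σ := by
              rw [← mul_assoc, hst, mul_assoc, Equiv.swap_mul_self, mul_one]
            simp [hee]
    rw [eL, eR]
    exact clash_comm hτ hx hy hqx hqy (by ring)
  · by_cases hB : σ w = z + 1 ∧ σ (w + 1) = z
    · obtain ⟨h1, h2⟩ := hB
      have invz : σ⁻¹ z = w + 1 := by rw [Equiv.Perm.inv_eq_iff_eq]; exact h2.symm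
      have invz1 : σ⁻¹ (z + 1) = w := by rw [Equiv.Perm.inv_eq_iff_eq]; exact h1.symm
      have hst : Equiv.swap z (z + 1) * σ = σ * Equiv.swap w (w + 1) := by
        apply Equiv.ext; intro u
        simp only [Equiv.Perm.mul_apply]
        by_cases hu : u = w
        · subst hu; simp [h1, h2]
        · by_cases hu' : u = w + 1
          · subst hu'; simp [h1, h2]
          · have h3 : σ u ≠ z := fun he => hu' (σ.injective (he.trans h2.symm))
            have h4 : σ u ≠ z + 1 := fun he => hu (σ.injective (he.trans h1.symm))
            rw [Equiv.swap_apply_of_ne_of_ne hu hu', Equiv.swap_apply_of_ne_of_ne h3 h4]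
      have hτ : σ ≠ σ * Equiv.swap w (w + 1) := by
        intro he
        nth_rewrite 1 [← mul_one σ] at he
        have h5 := mul_left_cancel he
        have h6 := (Equiv.swap_eq_one_iff.mp h5.symm)
        omega
      have eL : (leftStep q hq z x hx σ).bind (swapStep q hq w y hy)
          = (bern (q * x) hqx).bind fun b =>
              (bern (if b then y else q * y)
                  (by cases b with | false => simpa using hqy | true => simpa using hy)).bind
                fun c => PMF.pure (if b = c then σ else σ * Equiv.swap w (w + 1)) := by
        rw [hpL]
        refine bern_bind_congr (by rw [invz, invz1, if_neg (by omega)]) fun b => ?_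
        cases b
        · show swapStep q hq w y hy σ = _
          refine (swapStep_eq q hq w y hy σ (p := q * y) hqy
            (by rw [h1, h2, if_neg (by omega)])).trans ?_
          refine bern_bind_congr (by simp) fun c => ?_
          cases c <;> simp
        · show swapStep q hq w y hy (Equiv.swap z (z + 1) * σ) = _
          refine (swapStep_eq q hq w y hy _ (p := y) hy ?_).trans ?_
          · have e1 : (Equiv.swap z (z + 1) * σ) w = z := by
              simp [Equiv.Perm.mul_apply, h1]
            have e2 : (Equiv.swap z (z + 1) * σ) (w + 1) = z + 1 := by
              simp [Equiv.Perm.mul_apply, h2]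
            rw [e1, e2, if_pos (by omega)]
          · refine bern_bind_congr (by simp) fun c => ?_
            cases c
            · simp [hst]
            · have hee : (Equiv.swap z (z + 1) * σ) * Equiv.swap w (w + 1) = σ := by
                rw [hst, mul_assoc, Equiv.swap_mul_self, mul_one]
              simp [hee]
      have eR : (swapStep q hq w y hy σ).bind (leftStep q hq z x hx)
          = (bern (q * y) hqy).bind fun c =>
              (bern (if c then x else q * x)
                  (by cases c with | false => simpa using hqx | true => simpa using hx)).bind
                fun b => PMF.pure (if b = c then σ else σ * Equiv.swap w (w + 1)) := by
        rw [hpR]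
        refine bern_bind_congr (by rw [h1, h2, if_neg (by omega)]) fun c => ?_
        cases c
        · show leftStep q hq z x hx σ = _
          refine (leftStep_eq q hq z x hx σ (p := q * x) hqx
            (by rw [invz, invz1, if_neg (by omega)])).trans ?_
          refine bern_bind_congr (by simp) fun b => ?_
          cases b
          · simp
          · simp [hst]
        · show leftStep q hq z x hx (σ * Equiv.swap w (w + 1)) = _
          refine (leftStep_eq q hq z x hx _ (p := x) hx ?_).trans ?_
          · have e1 : (σ * Equiv.swap w (w + 1))⁻¹ z = w := by
              rw [mul_inv_rev, Equiv.swap_inv, Equiv.Perm.mul_apply, invz]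
              simp
            have e2 : (σ * Equiv.swap w (w + 1))⁻¹ (z + 1) = w + 1 := by
              rw [mul_inv_rev, Equiv.swap_inv, Equiv.Perm.mul_apply, invz1]
              simp
            rw [e1, e2, if_pos (by omega)]
          · refine bern_bind_congr (by simp) fun b => ?_
            cases b
            · simp
            · have hee : Equiv.swap z (z + 1) * (σ * Equiv.swap w (w + 1)) = σ := by
                rw [← mul_assoc, hst, mul_assoc, Equiv.swap_mul_self, mul_one]
              simp [hee]
      rw [eL, eR]
      exact clash_comm hτ hqx hqy hx hy (by ring)
    · -- generic case: the two coins are independent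
      have hcR : ∀ b : Bool,
          ((if b then Equiv.swap z (z + 1) * σ else σ) w
              < (if b then Equiv.swap z (z + 1) * σ else σ) (w + 1))
            ↔ σ w < σ (w + 1) := by
        intro b; cases b
        · simp
        · simp only [if_true]
          rw [Equiv.Perm.mul_apply, Equiv.Perm.mul_apply]
          exact swap_lt_swap hww hA hB
      have hcL : ∀ c : Bool,
          ((if c then σ * Equiv.swap w (w + 1) else σ)⁻¹ z
              < (if c then σ * Equiv.swap w (w + 1) else σ)⁻¹ (z + 1))
            ↔ σ⁻¹ z < σ⁻¹ (z + 1) := by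
        intro c; cases c
        · simp
        · simp only [if_true, mul_inv_rev, Equiv.swap_inv, Equiv.Perm.mul_apply]
          refine swap_lt_swap hzz ?_ ?_
          · rintro ⟨ha, hb⟩
            exact hA ⟨by rw [← ha]; exact σ.apply_symm_apply z,
              by rw [← hb]; exact σ.apply_symm_apply (z + 1)⟩
          · rintro ⟨ha, hb⟩
            exact hB ⟨by rw [← hb]; exact σ.apply_symm_apply (z + 1),
              by rw [← ha]; exact σ.apply_symm_apply z⟩
      have eL : (leftStep q hq z x hx σ).bind (swapStep q hq w y hy)
          = (bern (if σ⁻¹ z < σ⁻¹ (z + 1) then x else q * x) hpLb).bind fun b =>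
              (bern (if σ w < σ (w + 1) then y else q * y) hpRb).bind fun c =>
                PMF.pure ((if b then Equiv.swap z (z + 1) * σ else σ)
                  * (if c then Equiv.swap w (w + 1) else 1)) := by
        rw [hpL]
        refine bern_bind_congr rfl fun b => ?_
        refine (swapStep_eq q hq w y hy _ (p := if σ w < σ (w + 1) then y else q * y) hpRb
          ((if_congr (hcR b) rfl rfl).symm)).trans ?_
        refine bern_bind_congr rfl fun c => ?_
        cases c <;> simp
      have eR : (swapStep q hq w y hy σ).bind (leftStep q hq z x hx)
          = (bern (if σ w < σ (w + 1) then y else q * y) hpRb).bind fun c =>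
              (bern (if σ⁻¹ z < σ⁻¹ (z + 1) then x else q * x) hpLb).bind fun b =>
                PMF.pure ((if b then Equiv.swap z (z + 1) * σ else σ)
                  * (if c then Equiv.swap w (w + 1) else 1)) := by
        rw [hpR]
        refine bern_bind_congr rfl fun c => ?_
        refine (leftStep_eq q hq z x hx _ (p := if σ⁻¹ z < σ⁻¹ (z + 1) then x else q * x) hpLb
          ((if_congr (hcL c) rfl rfl).symm)).trans ?_
        refine bern_bind_congr rfl fun b => ?_
        cases b <;> cases c <;> simp [mul_assoc]
      rw [eL, eR, PMF.bind_comm]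

lemma map_inv_swapStep (q : ℝ≥0∞) (hq : q ≤ 1) (z : ℤ) (x : ℝ≥0∞) (hx : x ≤ 1)
    (η : Equiv.Perm ℤ) :
    (swapStep q hq z x hx η).map (fun π => π⁻¹) = leftStep q hq z x hx η⁻¹ := by
  simp only [swapStep, leftStep, PMF.map_bind, PMF.pure_map]
  refine bern_bind_congr (hp := by split_ifs <;> [exact hx; exact mul_le_one' hq hx])
    (by rw [inv_inv]) fun b => ?_
  cases b <;> simp [mul_inv_rev, Equiv.swap_inv]

lemma map_inv_runSwaps (q : ℝ≥0∞) (hq : q ≤ 1)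
    (ops : List (ℤ × {x : ℝ≥0∞ // x ≤ 1})) :
    ∀ η : Equiv.Perm ℤ,
      (runSwaps q hq ops η).map (fun π => π⁻¹) = runLeft q hq ops η⁻¹ := by
  induction ops with
  | nil =>
    intro η
    show (PMF.pure η).map _ = PMF.pure η⁻¹
    rw [PMF.pure_map]
  | cons hd rest ih =>
    intro η
    obtain ⟨z, x⟩ := hd
    show ((swapStep q hq z x.1 x.2 η).bind (runSwaps q hq rest)).map _
        = (leftStep q hq z x.1 x.2 η⁻¹).bind (runLeft q hq rest)
    rw [PMF.map_bind,
      show (fun σ => (runSwaps q hq rest σ).map fun π => π⁻¹)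
          = (runLeft q hq rest) ∘ (fun π : Equiv.Perm ℤ => π⁻¹) from funext fun σ => ih σ,
      ← PMF.bind_map, map_inv_swapStep]

lemma runLeft_swap_comm (q : ℝ≥0∞) (hq : q ≤ 1)
    (ops : List (ℤ × {x : ℝ≥0∞ // x ≤ 1})) :
    ∀ (w : ℤ) (y : ℝ≥0∞) (hy : y ≤ 1) (σ : Equiv.Perm ℤ),
      (swapStep q hq w y hy σ).bind (runLeft q hq ops)
        = (runLeft q hq ops σ).bind (swapStep q hq w y hy) := by
  induction ops with
  | nil =>
    intro w y hy σ
    rw [show runLeft q hq [] = PMF.pure from funext fun η => rfl,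
      PMF.bind_pure, PMF.pure_bind]
  | cons hd rest ih =>
    intro w y hy σ
    obtain ⟨z, x⟩ := hd
    rw [show runLeft q hq ((z, x) :: rest)
        = fun η => (leftStep q hq z x.1 x.2 η).bind (runLeft q hq rest) from
      funext fun η => rfl]
    calc (swapStep q hq w y hy σ).bind
            (fun η => (leftStep q hq z x.1 x.2 η).bind (runLeft q hq rest))
        = ((swapStep q hq w y hy σ).bind (leftStep q hq z x.1 x.2)).bind
            (runLeft q hq rest) := (PMF.bind_bind _ _ _).symm
      _ = ((leftStep q hq z x.1 x.2 σ).bind (swapStep q hq w y hy)).bind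
            (runLeft q hq rest) := by rw [← step_comm]
      _ = (leftStep q hq z x.1 x.2 σ).bind
            (fun η => (swapStep q hq w y hy η).bind (runLeft q hq rest)) :=
          PMF.bind_bind _ _ _
      _ = (leftStep q hq z x.1 x.2 σ).bind
            (fun η => (runLeft q hq rest η).bind (swapStep q hq w y hy)) :=
          congrArg _ (funext fun η => ih w y hy η)
      _ = ((leftStep q hq z x.1 x.2 σ).bind (runLeft q hq rest)).bind
            (swapStep q hq w y hy) := (PMF.bind_bind _ _ _).symm

lemma runSwaps_append (q : ℝ≥0∞) (hq : q ≤ 1)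
    (l1 l2 : List (ℤ × {x : ℝ≥0∞ // x ≤ 1})) :
    ∀ η, runSwaps q hq (l1 ++ l2) η = (runSwaps q hq l1 η).bind (runSwaps q hq l2) := by
  induction l1 with
  | nil =>
    intro η
    show runSwaps q hq l2 η = (PMF.pure η).bind _
    rw [PMF.pure_bind]
  | cons hd rest ih =>
    intro η
    obtain ⟨z, x⟩ := hd
    show (swapStep q hq z x.1 x.2 η).bind (runSwaps q hq (rest ++ l2))
        = ((swapStep q hq z x.1 x.2 η).bind (runSwaps q hq rest)).bind (runSwaps q hq l2)
    rw [PMF.bind_bind]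
    exact congrArg _ (funext fun σ => ih σ)

lemma leftStep_one (q : ℝ≥0∞) (hq : q ≤ 1) (z : ℤ) (x : ℝ≥0∞) (hx : x ≤ 1) :
    leftStep q hq z x hx 1 = swapStep q hq z x hx 1 := by
  simp only [leftStep, swapStep]
  exact bern_bind_congr (hp' := by split_ifs <;> [exact hx; exact mul_le_one' hq hx])
    (by rw [inv_one]) fun b => by cases b <;> simp

lemma runLeft_one (q : ℝ≥0∞) (hq : q ≤ 1) :
    ∀ ops : List (ℤ × {x : ℝ≥0∞ // x ≤ 1}),
      runLeft q hq ops 1 = runSwaps q hq ops.reverse 1 := by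
  intro ops
  induction ops with
  | nil => rfl
  | cons hd rest ih =>
    obtain ⟨z, x⟩ := hd
    show (leftStep q hq z x.1 x.2 1).bind (runLeft q hq rest)
        = runSwaps q hq ((z, x) :: rest).reverse 1
    have hsingle : runSwaps q hq [(z, x)] = swapStep q hq z x.1 x.2 := by
      funext η
      show (swapStep q hq z x.1 x.2 η).bind (runSwaps q hq []) = _
      rw [show runSwaps q hq [] = PMF.pure from funext fun σ => rfl, PMF.bind_pure]
    rw [List.reverse_cons, runSwaps_append, hsingle, leftStep_one, ← ih,
      ← runLeft_swap_comm]

/-- Consequence of the color-position symmetry: the probability that the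
particle of color `y` ends weakly to the left of position `x` in the forward
process equals the probability that in the reversed process position `y`
carries a color `≤ x`. -/
theorem statement6 (q : ℝ≥0∞) (hq : q ≤ 1)
    (ops : List (ℤ × {x : ℝ≥0∞ // x ≤ 1})) (x y : ℤ) :
    (runSwaps q hq ops 1).toOuterMeasure {π | π⁻¹ y ≤ x}
      = (runSwaps q hq ops.reverse 1).toOuterMeasure {π | π y ≤ x} := by
  have hset : {π : Equiv.Perm ℤ | π⁻¹ y ≤ x}
      = (fun π : Equiv.Perm ℤ => π⁻¹) ⁻¹' {π : Equiv.Perm ℤ | π y ≤ x} := rfl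
  rw [hset, ← PMF.toOuterMeasure_map_apply, map_inv_runSwaps, inv_one, runLeft_one]
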